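/- Let F be a field and d₀, d₁, d₂ ∈ F×. The linear maps α_i ↦ α_{1−i}, β_i ↦ β_{1−i}, γ_i ↦ d_i⁻¹ γ_{1−i} (indices mod 3) give an isomorphism of bilinear maps φ_{d₀,d₁,d₂} → φ_{d₁⁻¹, d₀⁻¹, d₂⁻¹}. -/
import Mathlib


/-- The split Albert multiplication `φ_{d₀,d₁,d₂}` in coordinates. -/
def albert {F : Type*} [Field F] (d x y : Fin 3 → F) : Fin 3 → F :=
  fun k => x (k + 1) * y (k + 2) + d k * x (k + 2) * y (k + 1)

/-- The maps `α_i ↦ α_{1−i}`, `β_i ↦ β_{1−i}`, `γ_i ↦ d_i⁻¹γ_{1−i}` give an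
isomorphism `φ_{d₀,d₁,d₂} → φ_{d₁⁻¹,d₀⁻¹,d₂⁻¹}`. -/
theorem stmt7 {F : Type*} [Field F] (d : Fin 3 → F) (hd : ∀ i, d i ≠ 0) :
    ∀ u v : Fin 3 → F,
      (fun j => (d (1 - j))⁻¹ * albert d u v (1 - j)) =
        albert (fun j => (d (1 - j))⁻¹)
          (fun j => u (1 - j)) (fun j => v (1 - j)) := by
  intro u v
  funext j
  fin_cases j <;> simp [albert] <;>
    field_simp [hd] <;> ring
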